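/- arXiv:2104.07369 — 2 statements merged into one kernel-verified Lean document; each statement's English description precedes it below -/
import Mathlib

section
/- For every nonempty packed word W of length ℓ there exists a unique pair (I, w) consisting of a nonempty subset I ⊆ {1,…,ℓ} and a packed word w (of length ℓ − |I|) such that W = φ_I(w). -/
/-- The maximum letter of a word (a list of natural numbers), with `wmax [] = 0`. -/
def wmax (w : List ℕ) : ℕ := w.foldr max 0

/-- A word over the positive integers is packed if every letter from `1` to its maximum
occurs in it. -/
def IsPacked (w : List ℕ) : Prop :=
  (∀ x ∈ w, 0 < x) ∧ ∀ i : ℕ, 0 < i → i ≤ wmax w → i ∈ w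

/-- `phi I w` inserts occurrences of the new maximum letter `wmax w + 1` so that they
end up exactly at the (1-based) positions in `I`; the remaining positions carry the
letters of `w` in order. -/
def phi (I : Finset ℕ) (w : List ℕ) : List ℕ :=
  (List.range (w.length + I.card)).map (fun j =>
    if j + 1 ∈ I then wmax w + 1
    else w.getD ((List.range j).countP (fun k => decide (k + 1 ∉ I))) 0)

/-- The maximal letter of `w` occurs exactly at the (1-based) positions belonging to `I`. -/
def maxAt (w : List ℕ) (I : Finset ℕ) : Prop :=
  (∀ i ∈ I, 1 ≤ i ∧ i ≤ w.length) ∧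
  ∀ j, j < w.length → (w.getD j 0 = wmax w ↔ j + 1 ∈ I)

/-! If `W = φ_I(w)` with `I` nonempty, the inserted letter `max w + 1` is the maximum of `W`,
so `I` must be the set of positions of `max W` in `W` and `w` must be `W` with the letters
`max W` deleted. Conversely, for a packed `W` this deletion leaves a packed word with maximum
`max W - 1`, and reinserting `max W` at its old positions gives back `W`, since a word is
determined by the positions of a letter `M` together with what remains after deleting `M`. -/

theorem wmax_le_iff {w : List ℕ} {b : ℕ} : wmax w ≤ b ↔ ∀ x ∈ w, x ≤ b := by
  induction w with
  | nil => simp [wmax]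
  | cons a t ih => simp [wmax, ← ih]

theorem le_wmax_of_mem {w : List ℕ} {x : ℕ} (h : x ∈ w) : x ≤ wmax w :=
  wmax_le_iff.mp le_rfl x h

theorem wmax_eq_of_mem {w : List ℕ} {M : ℕ} (hM : M ∈ w) (h : ∀ x ∈ w, x ≤ M) : wmax w = M :=
  le_antisymm (wmax_le_iff.mpr h) (le_wmax_of_mem hM)

theorem wmax_mem {w : List ℕ} (hw : w ≠ []) : wmax w ∈ w := by
  induction w with
  | nil => exact absurd rfl hw
  | cons a t ih =>
    change max a (wmax t) ∈ a :: t
    rcases eq_or_ne t [] with rfl | ht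
    · simp [wmax]
    · rcases max_choice a (wmax t) with h | h <;> rw [h]
      · exact List.mem_cons_self
      · exact List.mem_cons_of_mem _ (ih ht)

theorem wmax_filter_ne_wmax_le (W : List ℕ) : wmax (W.filter (· ≠ wmax W)) ≤ wmax W - 1 :=
  wmax_le_iff.mpr fun x hx => by
    obtain ⟨hxW, hx⟩ := List.mem_filter.mp hx
    have := le_wmax_of_mem hxW
    simp only [ne_eq, decide_eq_true_eq] at hx
    omega

theorem getD_le_wmax (w : List ℕ) (j : ℕ) : w.getD j 0 ≤ wmax w := by
  rcases lt_or_ge j w.length with h | h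
  · rw [List.getD_eq_getElem _ _ h]; exact le_wmax_of_mem (List.getElem_mem h)
  · rw [List.getD_eq_default _ _ h]; exact Nat.zero_le _

theorem List.map_getD_range {α : Type*} (l : List α) (d : α) :
    (List.range l.length).map (fun j => l.getD j d) = l :=
  List.ext_getElem (by simp) (fun i hi _ => by simp_all)

theorem List.map_countP_filter_range (q : ℕ → Bool) (N : ℕ) :
    ((List.range N).filter q).map (fun j => (List.range j).countP q) =
      List.range ((List.range N).countP q) := by
  induction N with
  | zero => simp
  | succ N ih =>
    rw [List.range_succ, List.filter_append, List.map_append, ih, List.countP_append]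
    by_cases hq : q N <;> simp [hq, List.range_succ]

theorem List.eq_of_map_eq_of_filter_eq {α : Type*} [DecidableEq α] {U V : List α} {M : α}
    (hmask : U.map (· = M) = V.map (· = M))
    (hfilter : U.filter (· ≠ M) = V.filter (· ≠ M)) : U = V := by
  induction U generalizing V with
  | nil => simpa using hmask.symm
  | cons a U ih =>
    cases V with
    | nil => simp at hmask
    | cons b V =>
      simp only [List.map_cons, List.cons.injEq, eq_iff_iff] at hmask
      by_cases ha : a = M
      · have hb : b = M := hmask.1.mp ha
        simp only [List.filter_cons, ha, hb, ne_eq, not_true_eq_false, decide_false,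
          Bool.false_eq_true, if_false] at hfilter
        rw [ha, hb, ih hmask.2 hfilter]
      · have hb : b ≠ M := fun hb => ha (hmask.1.mpr hb)
        simp only [List.filter_cons, ha, hb, ne_eq, not_false_eq_true, decide_true, if_true,
          List.cons.injEq] at hfilter
        rw [hfilter.1, ih hmask.2 hfilter.2]

theorem countP_range_succ_mem {I : Finset ℕ} {N : ℕ} (hI : I ⊆ Finset.Icc 1 N) :
    (List.range N).countP (fun j => decide (j + 1 ∈ I)) = I.card := by
  have hcard : ((Finset.range N).filter (· + 1 ∈ I)).card = I.card := by
    refine Finset.card_nbij' (· + 1) (· - 1) (by intro j; simp) ?_ (by intro j; simp) ?_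
    · intro i hi
      have := Finset.mem_Icc.mp (hI hi)
      simp only [Finset.coe_filter, Finset.mem_range, Set.mem_ofPred_eq,
        Nat.sub_add_cancel this.1]
      exact ⟨by omega, hi⟩
    · intro i hi
      simp [Nat.sub_add_cancel (Finset.mem_Icc.mp (hI hi)).1]
  rw [← hcard, List.countP_eq_length_filter,
    ← List.toFinset_card_of_nodup (List.nodup_range.filter _)]
  congr 1
  ext j
  simp

theorem length_phi (I : Finset ℕ) (w : List ℕ) : (phi I w).length = w.length + I.card := by
  simp [phi]

theorem getD_phi {I : Finset ℕ} {w : List ℕ} {j : ℕ} (hj : j < w.length + I.card) :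
    (phi I w).getD j 0 = if j + 1 ∈ I then wmax w + 1
      else w.getD ((List.range j).countP (fun k => decide (k + 1 ∉ I))) 0 := by
  rw [List.getD_eq_getElem _ _ (by rwa [length_phi])]
  simp [phi]

theorem getD_phi_eq_succ_wmax_iff (I : Finset ℕ) (w : List ℕ) (j : ℕ) :
    (phi I w).getD j 0 = wmax w + 1 ↔ j < w.length + I.card ∧ j + 1 ∈ I := by
  by_cases hj : j < w.length + I.card
  · have := getD_le_wmax w ((List.range j).countP (fun k => decide (k + 1 ∉ I)))
    rw [getD_phi hj]
    split_ifs with hjI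
    · simp only [hj, hjI, and_self]
    · simp only [hjI, and_false, iff_false]
      omega
  · rw [List.getD_eq_default _ _ (by rw [length_phi]; omega)]
    simp [hj]

theorem le_succ_wmax_of_mem_phi {I : Finset ℕ} {w : List ℕ} {x : ℕ} (hx : x ∈ phi I w) :
    x ≤ wmax w + 1 := by
  simp only [phi, List.mem_map] at hx
  obtain ⟨j, -, rfl⟩ := hx
  split
  · exact le_rfl
  · exact (getD_le_wmax w _).trans (Nat.le_succ _)

theorem wmax_phi {I : Finset ℕ} {w : List ℕ} (hI : I.Nonempty)
    (hsub : I ⊆ Finset.Icc 1 (w.length + I.card)) : wmax (phi I w) = wmax w + 1 := by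
  obtain ⟨i, hi⟩ := hI
  have hi' := Finset.mem_Icc.mp (hsub hi)
  have hget : (phi I w).getD (i - 1) 0 = wmax w + 1 :=
    (getD_phi_eq_succ_wmax_iff I w _).mpr ⟨by omega, by rwa [Nat.sub_add_cancel hi'.1]⟩
  refine wmax_eq_of_mem ?_ fun x hx => le_succ_wmax_of_mem_phi hx
  rw [← hget, List.getD_eq_getElem _ _ (by rw [length_phi]; omega)]
  exact List.getElem_mem _

theorem maxAt_phi {I : Finset ℕ} {w : List ℕ} (hI : I.Nonempty)
    (hsub : I ⊆ Finset.Icc 1 (w.length + I.card)) : maxAt (phi I w) I := by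
  refine ⟨fun i hi => by simpa [length_phi] using hsub hi, fun j hj => ?_⟩
  rw [wmax_phi hI hsub, getD_phi_eq_succ_wmax_iff]
  rw [length_phi] at hj
  exact and_iff_right hj

theorem filter_phi {I : Finset ℕ} {w : List ℕ} (hsub : I ⊆ Finset.Icc 1 (w.length + I.card)) :
    (phi I w).filter (· ≠ wmax w + 1) = w := by
  set N := w.length + I.card
  set cnt : ℕ → ℕ := fun j => (List.range j).countP (fun k => decide (k + 1 ∉ I))
  have hcnt : cnt N = w.length := by
    have := List.length_eq_countP_add_countP (fun j => decide (j + 1 ∈ I)) (l := List.range N)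
    simp only [List.length_range, countP_range_succ_mem hsub, decide_not,
      Bool.decide_eq_true] at this
    simp only [cnt, decide_not]
    omega
  calc (phi I w).filter (· ≠ wmax w + 1)
      = ((List.range N).filter (fun j => decide (j + 1 ∉ I))).map (fun j => w.getD (cnt j) 0) := by
        rw [phi, List.filter_map, List.filter_congr (q := fun j => decide (j + 1 ∉ I)) (by
          intro j _
          have := getD_le_wmax w (cnt j)
          simp only [Function.comp_apply]
          split_ifs with hjI
          · simp [hjI]
          · rw [decide_eq_decide]
            exact iff_of_true (Nat.lt_succ_of_le this).ne hjI)]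
        exact List.map_congr_left fun j hj => if_neg (by simpa using (List.mem_filter.mp hj).2)
    _ = (List.range (cnt N)).map (fun c => w.getD c 0) := by
        rw [← List.map_countP_filter_range, List.map_map]; rfl
    _ = w := by rw [hcnt, List.map_getD_range]

namespace maxAt

variable {W : List ℕ} {I : Finset ℕ}

theorem subset_Icc (h : maxAt W I) : I ⊆ Finset.Icc 1 W.length :=
  fun i hi => Finset.mem_Icc.mpr (h.1 i hi)

theorem unique {I' : Finset ℕ} (h : maxAt W I) (h' : maxAt W I') : I = I' := by
  have key : ∀ {J J'}, maxAt W J → maxAt W J' → J ⊆ J' := by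
    intro J J' hJ hJ' i hi
    obtain ⟨hi1, hin⟩ := hJ.1 i hi
    have hj : i - 1 < W.length := by omega
    rw [← Nat.sub_add_cancel hi1] at hi ⊢
    exact (hJ'.2 _ hj).mp ((hJ.2 _ hj).mpr hi)
  exact (key h h').antisymm (key h' h)

theorem map_eq (h : maxAt W I) :
    W.map (· = wmax W) = (List.range W.length).map (· + 1 ∈ I) :=
  List.ext_getElem (by simp) fun j hj _ => by
    simp only [List.length_map] at hj
    have := h.2 j hj
    rw [List.getD_eq_getElem _ _ hj] at this
    simpa using this

theorem nonempty (h : maxAt W I) (hW : W ≠ []) : I.Nonempty := by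
  obtain ⟨j, hj, hjW⟩ := List.mem_iff_getElem.mp (wmax_mem hW)
  exact ⟨j + 1, (h.2 j hj).mp (by rw [List.getD_eq_getElem _ _ hj, hjW])⟩

theorem card_eq (h : maxAt W I) : I.card = W.countP (· = wmax W) := by
  rw [← countP_range_succ_mem h.subset_Icc]
  calc (List.range W.length).countP (fun j => decide (j + 1 ∈ I))
      = (List.range W.length).countP (fun j => decide (W.getD j 0 = wmax W)) :=
        List.countP_congr fun j hj => by simpa using (h.2 j (List.mem_range.mp hj)).symm
    _ = W.countP (· = wmax W) := by
        have := List.countP_map (p := fun x => decide (x = wmax W)) (f := fun j => W.getD j 0)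
          (l := List.range W.length)
        rw [List.map_getD_range] at this
        exact this.symm

end maxAt

theorem exists_maxAt (W : List ℕ) : ∃ I, maxAt W I :=
  ⟨(Finset.Icc 1 W.length).filter (fun i => W.getD (i - 1) 0 = wmax W),
    fun i hi => by simpa using (Finset.mem_filter.mp hi).1,
    fun j hj => by simp [hj]⟩

namespace IsPacked

variable {W : List ℕ}

theorem filter_ne_wmax (hW : IsPacked W) : IsPacked (W.filter (· ≠ wmax W)) := by
  refine ⟨fun x hx => hW.1 x (List.mem_filter.mp hx).1, fun i hi hiw => ?_⟩
  have := wmax_filter_ne_wmax_le W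
  exact List.mem_filter.mpr ⟨hW.2 i hi (by omega), by simp only [ne_eq, decide_eq_true_eq]; omega⟩

theorem wmax_filter_ne_wmax (hW : IsPacked W) (hne : W ≠ []) :
    wmax (W.filter (· ≠ wmax W)) + 1 = wmax W := by
  have hM : 0 < wmax W := hW.1 _ (wmax_mem hne)
  have hle := wmax_filter_ne_wmax_le W
  rcases Nat.lt_or_ge 1 (wmax W) with h | h
  · have : wmax W - 1 ∈ W.filter (· ≠ wmax W) :=
      List.mem_filter.mpr
        ⟨hW.2 _ (by omega) (by omega), by simp only [ne_eq, decide_eq_true_eq]; omega⟩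
    have := le_wmax_of_mem this
    omega
  · omega

theorem phi_filter_ne_wmax_of_maxAt (hW : IsPacked W) (hne : W ≠ []) {I : Finset ℕ}
    (hI : maxAt W I) :
    phi I (W.filter (· ≠ wmax W)) = W := by
  set w := W.filter (· ≠ wmax W)
  have hmax : wmax w + 1 = wmax W := hW.wmax_filter_ne_wmax hne
  have hlen : w.length + I.card = W.length := by
    have := List.length_eq_countP_add_countP (fun x => decide (x = wmax W)) (l := W)
    rw [hI.card_eq, ← List.countP_eq_length_filter]
    simp only [Bool.decide_eq_true, ne_eq, decide_not] at this ⊢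
    omega
  have hsub : I ⊆ Finset.Icc 1 (w.length + I.card) := hlen ▸ hI.subset_Icc
  have hwmax : wmax (phi I w) = wmax W := (wmax_phi (hI.nonempty hne) hsub).trans hmax
  apply List.eq_of_map_eq_of_filter_eq (M := wmax W)
  · rw [← hwmax, (maxAt_phi (hI.nonempty hne) hsub).map_eq, hwmax, hI.map_eq, length_phi, hlen]
  · simpa only [hmax] using filter_phi hsub

end IsPacked

theorem unique_phi_decomposition (W : List ℕ) (hW : IsPacked W) (hne : W ≠ []) :
    ∃! p : Finset ℕ × List ℕ,
      p.1.Nonempty ∧ p.1 ⊆ Finset.Icc 1 W.length ∧ IsPacked p.2 ∧ W = phi p.1 p.2 := by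
  obtain ⟨I₀, hI₀⟩ := exists_maxAt W
  refine ⟨(I₀, W.filter (· ≠ wmax W)), ⟨hI₀.nonempty hne, hI₀.subset_Icc, hW.filter_ne_wmax,
    (hW.phi_filter_ne_wmax_of_maxAt hne hI₀).symm⟩, ?_⟩
  rintro ⟨I, w⟩ ⟨hI, hsub, -, rfl⟩
  rw [length_phi] at hsub
  refine Prod.ext ((maxAt_phi hI hsub).unique hI₀) ?_
  change w = (phi I w).filter (· ≠ wmax (phi I w))
  rw [wmax_phi hI hsub, filter_phi hsub]
end

section
/- The half-coproducts Δ_≺ and Δ_≻ on WQSym_+ satisfy the codendriform axioms (the duals of the dendriform axioms): as linear maps WQSym_+ → WQSym_+ ⊗ WQSym_+ ⊗ WQSym_+, (Δ_≺ ⊗ id) ∘ Δ_≺ = (id ⊗ (Δ_≺ + Δ_≻)) ∘ Δ_≺, (Δ_≻ ⊗ id) ∘ Δ_≺ = (id ⊗ Δ_≺) ∘ Δ_≻, and ((Δ_≺ + Δ_≻) ⊗ id) ∘ Δ_≻ = (id ⊗ Δ_≻) ∘ Δ_≻. In particular Δ̃ := Δ_≺ + Δ_≻ is coassociative. -/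
open scoped TensorProduct Classical

/-- `pack w` replaces every occurrence of the `i`-th smallest distinct letter of `w` by `i`. -/
def pack (w : List ℕ) : List ℕ :=
  w.map (fun a => (w.dedup.filter (fun b => b < a)).length + 1)

/-- The ambient free `ℚ`-vector space on all words. -/
abbrev V : Type := List ℕ →₀ ℚ

noncomputable instance : Zero (V ⊗[ℚ] V) :=
  (inferInstance : AddZeroClass (V ⊗[ℚ] V)).toZero

/-- The basis element `R_w`. -/
noncomputable def Rw (w : List ℕ) : V := Finsupp.single w 1

/-- `WQSym₊`: the span of the `R_w` over nonempty packed words `w`. -/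
noncomputable def Wplus : Submodule ℚ V :=
  Submodule.span ℚ {x : V | ∃ w : List ℕ, IsPacked w ∧ w ≠ [] ∧ x = Rw w}

/-- A valid cut for `Δ_≺` at position `i`: `1 ≤ i ≤ |w| - 1`, the letter sets of the two
factors are disjoint, and all occurrences of the maximum letter lie in the first `i`
positions. -/
def okL (w : List ℕ) (i : ℕ) : Prop :=
  1 ≤ i ∧ i < w.length ∧ (∀ a ∈ w.take i, a ∉ w.drop i) ∧ wmax w ∉ w.drop i

/-- A valid cut for `Δ_≻` at position `i`: `1 ≤ i ≤ |w| - 1`, the letter sets of the two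
factors are disjoint, and all occurrences of the maximum letter lie in the last `n - i`
positions. -/
def okR (w : List ℕ) (i : ℕ) : Prop :=
  1 ≤ i ∧ i < w.length ∧ (∀ a ∈ w.take i, a ∉ w.drop i) ∧ wmax w ∉ w.take i

noncomputable def cutsL (w : List ℕ) : V ⊗[ℚ] V :=
  ((((List.range w.length).filter (fun i => decide (okL w i))).map
    (fun i => Rw (pack (w.take i)) ⊗ₜ[ℚ] Rw (pack (w.drop i)))) : List (V ⊗[ℚ] V)).sum

noncomputable def cutsR (w : List ℕ) : V ⊗[ℚ] V :=
  ((((List.range w.length).filter (fun i => decide (okR w i))).map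
    (fun i => Rw (pack (w.take i)) ⊗ₜ[ℚ] Rw (pack (w.drop i)))) : List (V ⊗[ℚ] V)).sum

/-- The left half-coproduct `Δ_≺` of `WQSym₊`. -/
noncomputable def deltaL : V →ₗ[ℚ] V ⊗[ℚ] V :=
  Finsupp.lsum ℚ fun w => LinearMap.toSpanSingleton ℚ (V ⊗[ℚ] V) (cutsL w)

/-- The right half-coproduct `Δ_≻` of `WQSym₊`. -/
noncomputable def deltaR : V →ₗ[ℚ] V ⊗[ℚ] V :=
  Finsupp.lsum ℚ fun w => LinearMap.toSpanSingleton ℚ (V ⊗[ℚ] V) (cutsR w)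

/-! On a basis vector `R_w`, each side of each identity is a sum, over double cuts `w = a b c`
with `a`, `b`, `c` nonempty, of `R_{pack a} ⊗ R_{pack b} ⊗ R_{pack c}`: packing commutes with
taking factors, because `pack` relabels letters by a strictly monotone map, and such a
relabelling also preserves the cut conditions. Each identity therefore reduces to the equality of
the two iterated selections of double cuts. Both amount to the three factors having pairwise
disjoint letter sets, plus a condition saying which factor contains `max w`: `a` for the first
identity, `b` for the second, `c` for the third, and none for the coassociativity of
`Δ_≺ + Δ_≻`. -/

lemma le_wmax {x : ℕ} {l : List ℕ} (hx : x ∈ l) : x ≤ wmax l :=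
  List.le_max_of_le hx le_rfl

lemma wmax_le {n : ℕ} {l : List ℕ} (h : ∀ x ∈ l, x ≤ n) : wmax l ≤ n :=
  List.max_le_of_forall_le l n h

lemma wmax_mem_s13 {l : List ℕ} (hl : l ≠ []) : wmax l ∈ l :=
  List.maximum_mem (List.foldr_max_of_ne_nil hl).symm

lemma wmax_eq_of_subset {s l : List ℕ} (hsl : s ⊆ l) (hmem : wmax l ∈ s) : wmax s = wmax l :=
  le_antisymm (wmax_le fun _ hx => le_wmax (hsl hx)) (le_wmax hmem)

lemma wmax_append_of_not_mem_right {s t : List ℕ} (h : wmax (s ++ t) ∉ t) :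
    wmax s = wmax (s ++ t) := by
  rcases eq_or_ne (s ++ t) [] with hst | hst
  · obtain ⟨rfl, rfl⟩ := List.append_eq_nil_iff.1 hst
    rfl
  · exact wmax_eq_of_subset (List.subset_append_left _ _)
      ((List.mem_append.1 (wmax_mem_s13 hst)).resolve_right h)

lemma wmax_append_of_not_mem_left {s t : List ℕ} (h : wmax (s ++ t) ∉ s) :
    wmax t = wmax (s ++ t) := by
  rcases eq_or_ne (s ++ t) [] with hst | hst
  · obtain ⟨rfl, rfl⟩ := List.append_eq_nil_iff.1 hst
    rfl
  · exact wmax_eq_of_subset (List.subset_append_right _ _)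
      ((List.mem_append.1 (wmax_mem_s13 hst)).resolve_left h)

lemma wmax_map {φ : ℕ → ℕ} {l : List ℕ} (hφ : MonotoneOn φ {x | x ∈ l}) (hl : l ≠ []) :
    wmax (l.map φ) = φ (wmax l) :=
  le_antisymm (wmax_le (List.forall_mem_map.2 fun _ hx => hφ hx (wmax_mem_s13 hl) (le_wmax hx)))
    (le_wmax (List.mem_map_of_mem (wmax_mem_s13 hl)))

lemma mem_map_iff_of_injOn {φ : ℕ → ℕ} {l s : List ℕ} {a : ℕ} (hφ : Set.InjOn φ {x | x ∈ l})
    (hs : s ⊆ l) (ha : a ∈ l) : φ a ∈ s.map φ ↔ a ∈ s := by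
  simpa using hφ.mem_image_iff (s₁ := {x | x ∈ s}) (fun _ hx => hs hx) ha

def IsCut (w : List ℕ) (i : ℕ) : Prop :=
  1 ≤ i ∧ i < w.length ∧ (w.take i).Disjoint (w.drop i)

lemma okL_iff {w : List ℕ} {i : ℕ} : okL w i ↔ IsCut w i ∧ wmax w ∉ w.drop i := by
  simp only [okL, IsCut, and_assoc]
  rfl

lemma okR_iff {w : List ℕ} {i : ℕ} : okR w i ↔ IsCut w i ∧ wmax w ∉ w.take i := by
  simp only [okR, IsCut, and_assoc]
  rfl

lemma okL_le_isCut : okL ≤ IsCut := fun _ _ h => (okL_iff.1 h).1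

lemma okR_le_isCut : okR ≤ IsCut := fun _ _ h => (okR_iff.1 h).1

lemma isCut_map {φ : ℕ → ℕ} {l : List ℕ} {i : ℕ} (hφ : Set.InjOn φ {x | x ∈ l}) :
    IsCut (l.map φ) i ↔ IsCut l i := by
  simp only [IsCut, List.length_map, ← List.map_take, ← List.map_drop]
  refine and_congr_right fun _ => and_congr_right fun _ => ⟨List.Disjoint.of_map, ?_⟩
  rintro hdisj _ ha hb
  obtain ⟨a, ha', rfl⟩ := List.mem_map.1 ha
  exact hdisj ha'
    ((mem_map_iff_of_injOn hφ (List.drop_subset _ _) (List.take_subset _ _ ha')).1 hb)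

lemma okL_map {φ : ℕ → ℕ} {l : List ℕ} {i : ℕ} (hφ : StrictMonoOn φ {x | x ∈ l}) :
    okL (l.map φ) i ↔ okL l i := by
  rw [okL_iff, okL_iff, isCut_map hφ.injOn]
  refine and_congr_right fun hcut => ?_
  have hl : l ≠ [] := List.ne_nil_of_length_pos (Nat.zero_lt_of_lt hcut.2.1)
  rw [wmax_map hφ.monotoneOn hl, ← List.map_drop,
    mem_map_iff_of_injOn hφ.injOn (List.drop_subset _ _) (wmax_mem_s13 hl)]

lemma okR_map {φ : ℕ → ℕ} {l : List ℕ} {i : ℕ} (hφ : StrictMonoOn φ {x | x ∈ l}) :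
    okR (l.map φ) i ↔ okR l i := by
  rw [okR_iff, okR_iff, isCut_map hφ.injOn]
  refine and_congr_right fun hcut => ?_
  have hl : l ≠ [] := List.ne_nil_of_length_pos (Nat.zero_lt_of_lt hcut.2.1)
  rw [wmax_map hφ.monotoneOn hl, ← List.map_take,
    mem_map_iff_of_injOn hφ.injOn (List.take_subset _ _) (wmax_mem_s13 hl)]

def packRank (u : List ℕ) (a : ℕ) : ℕ := (u.toFinset.filter (· < a)).card + 1

lemma pack_eq_map_packRank (u : List ℕ) : pack u = u.map (packRank u) := by
  refine List.map_congr_left fun a _ => congrArg (· + 1) ?_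
  rw [← List.toFinset_card_of_nodup (u.nodup_dedup.filter _)]
  congr 1
  ext x
  simp

lemma strictMonoOn_packRank (u : List ℕ) : StrictMonoOn (packRank u) {x | x ∈ u} := by
  intro a ha b _ hab
  refine Nat.succ_lt_succ (Finset.card_lt_card ⟨fun x hx => ?_, ?_⟩)
  · simp only [Finset.mem_filter] at hx ⊢
    exact ⟨hx.1, hx.2.trans hab⟩
  · intro hsub
    simpa using hsub (Finset.mem_filter.2 ⟨List.mem_toFinset.2 ha, hab⟩)

lemma pack_map {φ : ℕ → ℕ} {l : List ℕ} (hφ : StrictMonoOn φ {x | x ∈ l}) :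
    pack (l.map φ) = pack l := by
  rw [pack_eq_map_packRank, pack_eq_map_packRank, List.map_map]
  refine List.map_congr_left fun a ha => congrArg (· + 1) ?_
  rw [show (l.map φ).toFinset = l.toFinset.image φ by ext; simp, Finset.filter_image,
    Finset.card_image_of_injOn]
  · exact congrArg Finset.card (Finset.filter_congr fun x hx =>
      hφ.lt_iff_lt (List.mem_toFinset.1 hx) ha)
  · exact hφ.injOn.mono fun x hx => List.mem_toFinset.1 (Finset.mem_filter.1 hx).1

lemma length_pack (u : List ℕ) : (pack u).length = u.length := List.length_map _

lemma pack_take_pack (u : List ℕ) (i : ℕ) : pack ((pack u).take i) = pack (u.take i) := by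
  rw [pack_eq_map_packRank u, ← List.map_take]
  exact pack_map ((strictMonoOn_packRank u).mono fun _ hx => List.take_subset _ _ hx)

lemma pack_drop_pack (u : List ℕ) (i : ℕ) : pack ((pack u).drop i) = pack (u.drop i) := by
  rw [pack_eq_map_packRank u, ← List.map_drop]
  exact pack_map ((strictMonoOn_packRank u).mono fun _ hx => List.drop_subset _ _ hx)

lemma okL_pack (u : List ℕ) (i : ℕ) : okL (pack u) i ↔ okL u i := by
  rw [pack_eq_map_packRank]
  exact okL_map (strictMonoOn_packRank u)

lemma okR_pack (u : List ℕ) (i : ℕ) : okR (pack u) i ↔ okR u i := by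
  rw [pack_eq_map_packRank]
  exact okR_map (strictMonoOn_packRank u)

lemma isCut_pack (u : List ℕ) (i : ℕ) : IsCut (pack u) i ↔ IsCut u i := by
  rw [pack_eq_map_packRank]
  exact isCut_map (strictMonoOn_packRank u).injOn

lemma isCut_append_length {s t : List ℕ} (hs : s ≠ []) (ht : t ≠ []) :
    IsCut (s ++ t) s.length ↔ s.Disjoint t := by
  simp [IsCut, List.length_pos_iff.2 ht, Nat.one_le_iff_ne_zero, hs]

lemma okL_append_length {s t : List ℕ} (hs : s ≠ []) (ht : t ≠ []) :
    okL (s ++ t) s.length ↔ s.Disjoint t ∧ wmax (s ++ t) ∉ t := by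
  rw [okL_iff, isCut_append_length hs ht, List.drop_left]

lemma okR_append_length {s t : List ℕ} (hs : s ≠ []) (ht : t ≠ []) :
    okR (s ++ t) s.length ↔ s.Disjoint t ∧ wmax (s ++ t) ∉ s := by
  rw [okR_iff, isCut_append_length hs ht, List.take_left]

lemma IsCut.wmax_mem_take_or_mem_drop {w : List ℕ} {i : ℕ} (h : IsCut w i) :
    wmax w ∈ w.take i ∨ wmax w ∈ w.drop i := by
  rw [← List.mem_append, List.take_append_drop]
  exact wmax_mem_s13 (List.ne_nil_of_length_pos (Nat.zero_lt_of_lt h.2.1))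

lemma okL_or_okR_iff {w : List ℕ} {i : ℕ} : okL w i ∨ okR w i ↔ IsCut w i := by
  rw [okL_iff, okR_iff, ← and_or_left, and_iff_left_iff_imp]
  intro hcut
  rcases hcut.wmax_mem_take_or_mem_drop with h | h
  exacts [Or.inl (hcut.2.2 h), Or.inr fun h' => hcut.2.2 h' h]

lemma not_okR_of_okL {w : List ℕ} {i : ℕ} (hL : okL w i) : ¬okR w i := by
  rw [okL_iff] at hL
  rw [okR_iff]
  rintro ⟨-, hR⟩
  rcases hL.1.wmax_mem_take_or_mem_drop with h | h
  exacts [hR h, hL.2 h]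

/-- No `i < j` is needed on the right: for `j ≤ i` the truncated `j - i` is `0`, which is never
a cut. -/
def DoubleCutsAgree (P Q P' Q' : List ℕ → ℕ → Prop) : Prop :=
  ∀ w i j, P w j ∧ Q (w.take j) i ↔ P' w i ∧ Q' (w.drop i) (j - i)

lemma exists_three_blocks {w : List ℕ} {i j : ℕ} (hij : i ≤ j) (hj : j ≤ w.length) :
    ∃ a b c : List ℕ, w = a ++ b ++ c ∧ a.length = i ∧ (a ++ b).length = j := by
  refine ⟨w.take i, (w.drop i).take (j - i), w.drop j, ?_, by simp; omega, by simp; omega⟩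
  rw [List.append_assoc, ← Nat.add_sub_cancel' hij, ← List.drop_drop, Nat.add_sub_cancel' hij,
    List.take_append_drop, List.take_append_drop]

lemma doubleCutsAgree_of_blocks {P Q P' Q' : List ℕ → ℕ → Prop}
    (hP : P ≤ IsCut) (hQ : Q ≤ IsCut) (hP' : P' ≤ IsCut) (hQ' : Q' ≤ IsCut)
    (h : ∀ a b c : List ℕ, a ≠ [] → b ≠ [] → c ≠ [] →
      (P (a ++ b ++ c) (a ++ b).length ∧ Q (a ++ b) a.length ↔
        P' (a ++ b ++ c) a.length ∧ Q' (b ++ c) b.length)) :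
    DoubleCutsAgree P Q P' Q' := by
  intro w i j
  suffices hblocks : 1 ≤ i → i < j → j < w.length →
      (P w j ∧ Q (w.take j) i ↔ P' w i ∧ Q' (w.drop i) (j - i)) by
    constructor
    · intro hl
      have h₁ := hP _ _ hl.1
      have h₂ := hQ _ _ hl.2
      simp only [IsCut, List.length_take] at h₁ h₂
      exact (hblocks (by omega) (by omega) (by omega)).1 hl
    · intro hr
      have h₁ := hP' _ _ hr.1
      have h₂ := hQ' _ _ hr.2
      simp only [IsCut, List.length_drop] at h₁ h₂
      exact (hblocks (by omega) (by omega) (by omega)).2 hr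
  intro hi hij hj
  obtain ⟨a, b, c, rfl, rfl, rfl⟩ := exists_three_blocks hij.le hj.le
  simp only [List.length_append] at hi hij hj
  have ha : a ≠ [] := List.ne_nil_of_length_pos hi
  have hb : b ≠ [] := List.ne_nil_of_length_pos (by omega)
  have hc : c ≠ [] := List.ne_nil_of_length_pos (by omega)
  rw [List.take_left, show (a ++ b).length - a.length = b.length by simp,
    show (a ++ b ++ c).drop a.length = b ++ c by simp]
  exact h a b c ha hb hc

lemma doubleCutsAgree_okL_okL : DoubleCutsAgree okL okL okL IsCut := by
  refine doubleCutsAgree_of_blocks okL_le_isCut okL_le_isCut okL_le_isCut le_rfl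
    fun a b c ha hb hc => ?_
  have hab : a ++ b ≠ [] := by simp [ha]
  have hbc : b ++ c ≠ [] := by simp [hb]
  have hmax := wmax_append_of_not_mem_right (s := a ++ b) (t := c)
  rw [okL_append_length hab hc, okL_append_length ha hb, List.append_assoc,
    okL_append_length ha hbc, isCut_append_length hb hc]
  grind [List.disjoint_append_left, List.disjoint_append_right]

lemma doubleCutsAgree_okL_okR : DoubleCutsAgree okL okR okR okL := by
  refine doubleCutsAgree_of_blocks okL_le_isCut okR_le_isCut okR_le_isCut okL_le_isCut
    fun a b c ha hb hc => ?_
  have hab : a ++ b ≠ [] := by simp [ha]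
  have hbc : b ++ c ≠ [] := by simp [hb]
  have hmaxL := wmax_append_of_not_mem_right (s := a ++ b) (t := c)
  have hmaxR := wmax_append_of_not_mem_left (s := a) (t := b ++ c)
  rw [okL_append_length hab hc, okR_append_length ha hb, List.append_assoc,
    okR_append_length ha hbc, okL_append_length hb hc]
  grind [List.disjoint_append_left, List.disjoint_append_right]

lemma doubleCutsAgree_okR_isCut : DoubleCutsAgree okR IsCut okR okR := by
  refine doubleCutsAgree_of_blocks okR_le_isCut le_rfl okR_le_isCut okR_le_isCut
    fun a b c ha hb hc => ?_
  have hab : a ++ b ≠ [] := by simp [ha]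
  have hbc : b ++ c ≠ [] := by simp [hb]
  have hmax := wmax_append_of_not_mem_left (s := a) (t := b ++ c)
  rw [okR_append_length hab hc, isCut_append_length ha hb, List.append_assoc,
    okR_append_length ha hbc, okR_append_length hb hc]
  grind [List.disjoint_append_left, List.disjoint_append_right]

lemma doubleCutsAgree_isCut : DoubleCutsAgree IsCut IsCut IsCut IsCut := by
  refine doubleCutsAgree_of_blocks le_rfl le_rfl le_rfl le_rfl fun a b c ha hb hc => ?_
  rw [isCut_append_length (by simp [ha]) hc, isCut_append_length ha hb,
    List.append_assoc, isCut_append_length ha (by simp [hb]), isCut_append_length hb hc]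
  simp only [List.disjoint_append_left, List.disjoint_append_right]
  tauto

noncomputable def cutSum (P : List ℕ → ℕ → Prop) (w : List ℕ) : V ⊗[ℚ] V :=
  ∑ i ∈ Finset.range w.length,
    if P w i then Rw (pack (w.take i)) ⊗ₜ[ℚ] Rw (pack (w.drop i)) else 0

noncomputable def cutCoproduct (P : List ℕ → ℕ → Prop) : V →ₗ[ℚ] V ⊗[ℚ] V :=
  Finsupp.lsum ℚ fun w => LinearMap.toSpanSingleton ℚ (V ⊗[ℚ] V) (cutSum P w)

lemma cutCoproduct_Rw (P : List ℕ → ℕ → Prop) (w : List ℕ) :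
    cutCoproduct P (Rw w) = cutSum P w := by
  simp [cutCoproduct, Rw]

lemma linearMap_ext_Rw {M : Type*} [AddCommMonoid M] [Module ℚ M] {f g : V →ₗ[ℚ] M}
    (h : ∀ w, f (Rw w) = g (Rw w)) : f = g :=
  Finsupp.lhom_ext' fun w => LinearMap.ext_ring (h w)

lemma list_sum_map_filter_range {M : Type*} [AddCommMonoid M] (n : ℕ) (p : ℕ → Prop)
    [DecidablePred p] (f : ℕ → M) :
    (((List.range n).filter (fun i => decide (p i))).map f).sum =
      ∑ i ∈ Finset.range n, if p i then f i else 0 := by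
  rw [← Finset.sum_filter]
  rfl

lemma deltaL_eq : deltaL = cutCoproduct okL :=
  linearMap_ext_Rw fun w => by
    rw [cutCoproduct_Rw, show deltaL (Rw w) = cutsL w by simp [deltaL, Rw]]
    exact list_sum_map_filter_range _ _ _

lemma deltaR_eq : deltaR = cutCoproduct okR :=
  linearMap_ext_Rw fun w => by
    rw [cutCoproduct_Rw, show deltaR (Rw w) = cutsR w by simp [deltaR, Rw]]
    exact list_sum_map_filter_range _ _ _

lemma cutCoproduct_add {P Q : List ℕ → ℕ → Prop} (hPQ : ∀ u i, P u i → ¬Q u i) :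
    cutCoproduct P + cutCoproduct Q = cutCoproduct fun u i => P u i ∨ Q u i :=
  linearMap_ext_Rw fun w => by
    simp only [LinearMap.add_apply, cutCoproduct_Rw, cutSum, ← Finset.sum_add_distrib]
    refine Finset.sum_congr rfl fun i _ => ?_
    by_cases hP : P w i
    · simp [hP, hPQ w i hP]
    · by_cases hQ : Q w i <;> simp [hP, hQ]

lemma deltaL_add_deltaR : deltaL + deltaR = cutCoproduct IsCut := by
  rw [deltaL_eq, deltaR_eq, cutCoproduct_add fun _ _ => not_okR_of_okL]
  simp only [okL_or_okR_iff]

lemma cutSum_pack {Q : List ℕ → ℕ → Prop} (hQ : ∀ u i, Q (pack u) i ↔ Q u i) (u : List ℕ) :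
    cutSum Q (pack u) = cutSum Q u := by
  simp only [cutSum, length_pack, hQ, pack_take_pack, pack_drop_pack]

lemma cutSum_eq_sum_range {Q : List ℕ → ℕ → Prop} (hQ : Q ≤ IsCut) {u : List ℕ} {N : ℕ}
    (hN : u.length ≤ N) :
    cutSum Q u = ∑ i ∈ Finset.range N,
      if Q u i then Rw (pack (u.take i)) ⊗ₜ[ℚ] Rw (pack (u.drop i)) else 0 :=
  Finset.sum_subset (Finset.range_subset_range.2 hN) fun i _ hi =>
    if_neg fun hQi => hi (Finset.mem_range.2 (hQ u i hQi).2.1)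

lemma sum_range_comp_tsub {M : Type*} [AddCommMonoid M] {f : ℕ → M} (hf : f 0 = 0)
    (n i : ℕ) : ∑ j ∈ Finset.range n, f (j - i) = ∑ k ∈ Finset.range (n - i), f k := by
  induction n with
  | zero => simp
  | succ n ih =>
    rw [Finset.sum_range_succ, ih]
    rcases le_or_gt i n with hin | hni
    · rw [Nat.sub_add_comm hin, Finset.sum_range_succ]
    · rw [Nat.sub_eq_zero_of_le hni.le, Nat.sub_eq_zero_of_le hni, hf, add_zero]

noncomputable def tripleCutTerm (w : List ℕ) (i j : ℕ) : V ⊗[ℚ] (V ⊗[ℚ] V) :=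
  Rw (pack (w.take i)) ⊗ₜ[ℚ] (Rw (pack ((w.drop i).take (j - i))) ⊗ₜ[ℚ] Rw (pack (w.drop j)))

lemma assoc_map_cutCoproduct_cutSum {P Q : List ℕ → ℕ → Prop} (hQ : Q ≤ IsCut)
    (hQpack : ∀ u i, Q (pack u) i ↔ Q u i) (w : List ℕ) :
    TensorProduct.assoc ℚ V V V (TensorProduct.map (cutCoproduct Q) LinearMap.id (cutSum P w)) =
      ∑ j ∈ Finset.range w.length, ∑ i ∈ Finset.range w.length,
        if P w j ∧ Q (w.take j) i then tripleCutTerm w i j else 0 := by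
  simp only [cutSum, map_sum]
  refine Finset.sum_congr rfl fun j _ => ?_
  by_cases hP : P w j
  · simp only [hP, if_true, true_and, TensorProduct.map_tmul, cutCoproduct_Rw, cutSum_pack hQpack,
      LinearMap.id_apply]
    rw [cutSum_eq_sum_range hQ (N := w.length) (by simp), TensorProduct.sum_tmul, map_sum]
    refine Finset.sum_congr rfl fun i _ => ?_
    split_ifs with hQij
    · have hij : i ≤ j := ((hQ _ _ hQij).2.1.trans_le (List.length_take_le _ _)).le
      rw [TensorProduct.assoc_tmul, tripleCutTerm, List.take_take, min_eq_left hij,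
        List.drop_take]
    · rw [TensorProduct.zero_tmul, map_zero]
  · simp [hP]

lemma map_cutCoproduct_cutSum {P Q : List ℕ → ℕ → Prop} (hQ : Q ≤ IsCut)
    (hQpack : ∀ u i, Q (pack u) i ↔ Q u i) (w : List ℕ) :
    TensorProduct.map LinearMap.id (cutCoproduct Q) (cutSum P w) =
      ∑ i ∈ Finset.range w.length, ∑ j ∈ Finset.range w.length,
        if P w i ∧ Q (w.drop i) (j - i) then tripleCutTerm w i j else 0 := by
  simp only [cutSum, map_sum]
  refine Finset.sum_congr rfl fun i _ => ?_
  by_cases hP : P w i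
  · simp only [hP, if_true, true_and, TensorProduct.map_tmul, cutCoproduct_Rw, cutSum_pack hQpack,
      LinearMap.id_apply]
    rw [cutSum, TensorProduct.tmul_sum, List.length_drop, ← sum_range_comp_tsub]
    · refine Finset.sum_congr rfl fun j _ => ?_
      split_ifs with hQij
      · have hij : i ≤ j := by have := (hQ _ _ hQij).1; omega
        rw [tripleCutTerm, List.drop_drop, Nat.add_sub_cancel' hij]
      · rw [TensorProduct.tmul_zero]
    · rw [if_neg fun h => by simpa using (hQ _ _ h).1, TensorProduct.tmul_zero]
  · simp [hP]

theorem assoc_map_cutCoproduct_comp {P Q P' Q' : List ℕ → ℕ → Prop} (hQ : Q ≤ IsCut)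
    (hQpack : ∀ u i, Q (pack u) i ↔ Q u i) (hQ' : Q' ≤ IsCut)
    (hQ'pack : ∀ u i, Q' (pack u) i ↔ Q' u i) (h : DoubleCutsAgree P Q P' Q') (x : V) :
    TensorProduct.assoc ℚ V V V
        (TensorProduct.map (cutCoproduct Q) LinearMap.id (cutCoproduct P x)) =
      TensorProduct.map LinearMap.id (cutCoproduct Q') (cutCoproduct P' x) := by
  suffices hext : (TensorProduct.assoc ℚ V V V).toLinearMap ∘ₗ
      TensorProduct.map (cutCoproduct Q) LinearMap.id ∘ₗ cutCoproduct P =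
        TensorProduct.map LinearMap.id (cutCoproduct Q') ∘ₗ cutCoproduct P' from
    LinearMap.congr_fun hext x
  refine linearMap_ext_Rw fun w => ?_
  simp only [LinearMap.comp_apply, LinearEquiv.coe_coe, cutCoproduct_Rw]
  rw [assoc_map_cutCoproduct_cutSum hQ hQpack, map_cutCoproduct_cutSum hQ' hQ'pack,
    Finset.sum_comm]
  exact Finset.sum_congr rfl fun i _ => Finset.sum_congr rfl fun j _ => if_congr (h w i j) rfl rfl

theorem WQSym_codendriform :
    ∀ x ∈ Wplus,
      ((TensorProduct.assoc ℚ V V V)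
          ((TensorProduct.map deltaL LinearMap.id) (deltaL x)) =
        (TensorProduct.map LinearMap.id (deltaL + deltaR)) (deltaL x)) ∧
      ((TensorProduct.assoc ℚ V V V)
          ((TensorProduct.map deltaR LinearMap.id) (deltaL x)) =
        (TensorProduct.map LinearMap.id deltaL) (deltaR x)) ∧
      ((TensorProduct.assoc ℚ V V V)
          ((TensorProduct.map (deltaL + deltaR) LinearMap.id) (deltaR x)) =
        (TensorProduct.map LinearMap.id deltaR) (deltaR x)) ∧
      ((TensorProduct.assoc ℚ V V V)
          ((TensorProduct.map (deltaL + deltaR) LinearMap.id) ((deltaL + deltaR) x)) =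
        (TensorProduct.map LinearMap.id (deltaL + deltaR)) ((deltaL + deltaR) x)) := by
  intro x _
  rw [deltaL_add_deltaR, deltaL_eq, deltaR_eq]
  exact ⟨assoc_map_cutCoproduct_comp okL_le_isCut okL_pack le_rfl isCut_pack
      doubleCutsAgree_okL_okL x,
    assoc_map_cutCoproduct_comp okR_le_isCut okR_pack okL_le_isCut okL_pack
      doubleCutsAgree_okL_okR x,
    assoc_map_cutCoproduct_comp le_rfl isCut_pack okR_le_isCut okR_pack
      doubleCutsAgree_okR_isCut x,
    assoc_map_cutCoproduct_comp le_rfl isCut_pack le_rfl isCut_pack doubleCutsAgree_isCut x⟩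
end
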